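/- For all n ≥ 2, the number of nonnesting permutations of the multiset {1,1,2,2,…,n,n} that avoid all three patterns 123, 213, and 231 equals 4(n − 1). -/

import Mathlib

/-!
Write `w = x 1 y 1 z`. Because `1` is the least letter, an ascent `a < b` among the other
letters forces `123`, `213` or `231` (place an occurrence of `1` before, between or after it),
while each of those patterns contains an ascent above its smallest letter. So the three
avoidances say exactly that `x y z` is weakly decreasing, i.e. `x y z = n n (n-1) (n-1) ⋯ 2 2`,
and then every ascent of `w` starts at a `1`. Hence an occurrence of `1221` is `1 b b 1`, i.e. a
repeated letter in `y`, and an occurrence of `2112` is `b 1 1 b`, i.e. a letter common to `x`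
and `z`. Since equal letters sit at positions `2i, 2i+1`, the admissible `(|x|, |y|)` are
`(p, 0)` with `p` even, `(p, 1)`, and `(p, 2)` with `p` odd, giving
`n + (2n-2) + (n-2) = 4(n-1)` words.
-/

/-- `w` is a permutation of the multiset `{1,1,2,2,…,n,n}`:
a word in which every value in `{1,…,n}` occurs exactly twice
and no other value occurs. -/
def IsMultisetPerm (n : ℕ) (w : List ℕ) : Prop :=
  ∀ i : ℕ, w.count i = if 1 ≤ i ∧ i ≤ n then 2 else 0

/-- `t` is order-isomorphic to the word `σ`:
same length, and entries compare (both `<` and `=`) in the same way. -/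
def OrderIsoWord (t σ : List ℕ) : Prop :=
  t.length = σ.length ∧
  ∀ r s : ℕ, r < σ.length → s < σ.length →
    ((t.getD r 0 < t.getD s 0 ↔ σ.getD r 0 < σ.getD s 0) ∧
     (t.getD r 0 = t.getD s 0 ↔ σ.getD r 0 = σ.getD s 0))

/-- `w` contains the pattern `σ`: some subsequence of `w`
is order-isomorphic to `σ`. -/
def Contains (w σ : List ℕ) : Prop :=
  ∃ t : List ℕ, t.Sublist w ∧ OrderIsoWord t σ

/-- `w` avoids the pattern `σ`. -/
def Avoids (w σ : List ℕ) : Prop := ¬ Contains w σ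

/-- `w` is a nonnesting permutation of `{1,1,2,2,…,n,n}`:
it avoids the patterns `1221` and `2112`. -/
def IsNonnesting (n : ℕ) (w : List ℕ) : Prop :=
  IsMultisetPerm n w ∧ Avoids w [1,2,2,1] ∧ Avoids w [2,1,1,2]

namespace List

variable {α : Type*}

theorem cons_sublist_append_iff_of_notMem {a : α} {l u v : List α} (ha : a ∉ u) :
    a :: l <+ u ++ v ↔ a :: l <+ v := by
  refine ⟨fun h => ?_, fun h => h.trans (sublist_append_right u v)⟩
  obtain ⟨_ | ⟨b, s⟩, t, hst, hs, ht⟩ := sublist_append_iff.mp h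
  · simpa [hst] using ht
  · obtain ⟨rfl, -⟩ := cons_eq_cons.mp hst
    exact absurd (hs.subset mem_cons_self) ha

theorem sublist_insert_of_pair_sublist {a b m : α} {w : List α} (hab : [a, b] <+ w)
    (hm : m ∈ w) (ha : m ≠ a) (hb : m ≠ b) :
    [m, a, b] <+ w ∨ [a, m, b] <+ w ∨ [a, b, m] <+ w := by
  obtain ⟨s, t, rfl⟩ := append_of_mem hm
  obtain ⟨l₁, l₂, hl, h₁, h₂⟩ := sublist_append_iff.mp hab
  rcases l₁ with _ | ⟨c, _ | ⟨d, _ | ⟨e, l₁⟩⟩⟩ <;>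
    simp only [nil_append, cons_append, cons.injEq, reduceCtorEq, and_false] at hl
  · subst hl
    exact .inl (((h₂.of_cons_of_ne ha.symm).cons_cons m).trans (sublist_append_right s _))
  · obtain ⟨rfl, rfl⟩ := hl
    exact .inr (.inl (h₁.append ((h₂.of_cons_of_ne hb.symm).cons_cons m)))
  · obtain ⟨rfl, rfl, rfl⟩ := hl
    exact .inr (.inr (h₁.append (singleton_sublist.mpr mem_cons_self)))

theorem eq_append_cons_append_cons_of_count_eq_two [DecidableEq α] {a : α} {l : List α}
    (h : l.count a = 2) :
    ∃ x y z, l = x ++ a :: (y ++ a :: z) ∧ a ∉ x ∧ a ∉ y ∧ a ∉ z := by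
  obtain ⟨x, r, rfl, hx⟩ := eq_append_cons_of_mem (count_pos_iff.mp (by omega : 0 < l.count a))
  have hr : r.count a = 1 := by simp [count_eq_zero.mpr hx] at h; omega
  obtain ⟨y, z, rfl, hy⟩ := eq_append_cons_of_mem (count_pos_iff.mp (by omega : 0 < r.count a))
  have hz : z.count a = 0 := by simpa [count_eq_zero.mpr hy] using hr
  exact ⟨x, y, z, rfl, hx, hy, count_eq_zero.mp hz⟩

theorem sublist_of_cons_append_singleton_sublist {m : α} {l x y z : List α} (hx : m ∉ x)
    (hz : m ∉ z) (h : m :: (l ++ [m]) <+ x ++ m :: (y ++ m :: z)) : l <+ y := by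
  have h₁ : l ++ [m] <+ y ++ m :: z :=
    cons_sublist_cons.mp ((cons_sublist_append_iff_of_notMem hx).mp h)
  have h₂ : m :: l.reverse <+ z.reverse ++ m :: y.reverse := by
    simpa using reverse_sublist.mpr h₁
  have h₃ := cons_sublist_cons.mp ((cons_sublist_append_iff_of_notMem (by simpa)).mp h₂)
  exact reverse_sublist.mp h₃

theorem mem_of_sublist_append_cons_append_cons {b m : α} {x y z : List α} (hb : b ≠ m)
    (hy : m ∉ y) (hz : m ∉ z) (h : [b, m, m] <+ x ++ m :: (y ++ m :: z)) : b ∈ x := by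
  classical
  by_contra hbx
  have h' := ((cons_sublist_append_iff_of_notMem hbx).mp h).of_cons_of_ne hb
  have := h'.count_le m
  simp [count_eq_zero.mpr hy, count_eq_zero.mpr hz, hb] at this

end List

open List

/-- Quantifying over `Fin σ.length` lets `Fin.forall_fin_succ` unfold all comparisons of a
concrete pattern. -/
theorem orderIsoWord_iff {t σ : List ℕ} : OrderIsoWord t σ ↔ t.length = σ.length ∧
    ∀ r s : Fin σ.length, (t.getD r 0 < t.getD s 0 ↔ σ.getD r 0 < σ.getD s 0) ∧
      (t.getD r 0 = t.getD s 0 ↔ σ.getD r 0 = σ.getD s 0) :=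
  and_congr_right fun _ =>
    ⟨fun h r s => h r s r.2 s.2, fun h r s hr hs => h ⟨r, hr⟩ ⟨s, hs⟩⟩

section Patterns

variable {w : List ℕ}

theorem contains_123_iff :
    Contains w [1, 2, 3] ↔ ∃ a b c, a < b ∧ b < c ∧ [a, b, c] <+ w := by
  refine ⟨fun ⟨t, hs, ht⟩ => ?_, fun ⟨a, b, c, hab, hbc, hs⟩ => ⟨_, hs, ?_⟩⟩
  · obtain ⟨a, b, c, rfl⟩ := length_eq_three.mp ht.1
    simp [orderIsoWord_iff, Fin.forall_fin_succ] at ht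
    exact ⟨a, b, c, by omega, by omega, hs⟩
  · simp [orderIsoWord_iff, Fin.forall_fin_succ]
    omega

theorem contains_213_iff :
    Contains w [2, 1, 3] ↔ ∃ a b c, a < b ∧ b < c ∧ [b, a, c] <+ w := by
  refine ⟨fun ⟨t, hs, ht⟩ => ?_, fun ⟨a, b, c, hab, hbc, hs⟩ => ⟨_, hs, ?_⟩⟩
  · obtain ⟨b, a, c, rfl⟩ := length_eq_three.mp ht.1
    simp [orderIsoWord_iff, Fin.forall_fin_succ] at ht
    exact ⟨a, b, c, by omega, by omega, hs⟩
  · simp [orderIsoWord_iff, Fin.forall_fin_succ]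
    omega

theorem contains_231_iff :
    Contains w [2, 3, 1] ↔ ∃ a b c, a < b ∧ b < c ∧ [b, c, a] <+ w := by
  refine ⟨fun ⟨t, hs, ht⟩ => ?_, fun ⟨a, b, c, hab, hbc, hs⟩ => ⟨_, hs, ?_⟩⟩
  · obtain ⟨b, c, a, rfl⟩ := length_eq_three.mp ht.1
    simp [orderIsoWord_iff, Fin.forall_fin_succ] at ht
    exact ⟨a, b, c, by omega, by omega, hs⟩
  · simp [orderIsoWord_iff, Fin.forall_fin_succ]
    omega

theorem contains_1221_iff : Contains w [1, 2, 2, 1] ↔ ∃ a b, a < b ∧ [a, b, b, a] <+ w := by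
  refine ⟨fun ⟨t, hs, ht⟩ => ?_, fun ⟨a, b, hab, hs⟩ => ⟨_, hs, ?_⟩⟩
  · obtain ⟨a, b, c, d, rfl⟩ := length_eq_four.mp ht.1
    simp [orderIsoWord_iff, Fin.forall_fin_succ] at ht
    obtain ⟨rfl, rfl⟩ : b = c ∧ a = d := by omega
    exact ⟨a, b, by omega, hs⟩
  · simp [orderIsoWord_iff, Fin.forall_fin_succ]
    omega

theorem contains_2112_iff : Contains w [2, 1, 1, 2] ↔ ∃ a b, a < b ∧ [b, a, a, b] <+ w := by
  refine ⟨fun ⟨t, hs, ht⟩ => ?_, fun ⟨a, b, hab, hs⟩ => ⟨_, hs, ?_⟩⟩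
  · obtain ⟨b, a, c, d, rfl⟩ := length_eq_four.mp ht.1
    simp [orderIsoWord_iff, Fin.forall_fin_succ] at ht
    obtain ⟨rfl, rfl⟩ : a = c ∧ b = d := by omega
    exact ⟨a, b, by omega, hs⟩
  · simp [orderIsoWord_iff, Fin.forall_fin_succ]
    omega

end Patterns

section MinimalLetter

variable {m : ℕ} {x y z : List ℕ}

theorem filter_ne_append_cons_append_cons (hlt : ∀ a ∈ x ++ y ++ z, m < a) :
    (x ++ m :: (y ++ m :: z)).filter (· ≠ m) = x ++ y ++ z := by
  calc _ = (x ++ y ++ z).filter (· ≠ m) := by simp [filter_append]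
    _ = x ++ y ++ z := filter_eq_self.mpr fun a ha => by simpa using (hlt a ha).ne'

theorem le_of_mem_append_cons_append_cons (hlt : ∀ a ∈ x ++ y ++ z, m < a) {a : ℕ}
    (ha : a ∈ x ++ m :: (y ++ m :: z)) : m ≤ a := by
  rcases eq_or_ne a m with rfl | ham
  · exact le_rfl
  · exact (hlt a (by simp_all)).le

theorem eq_of_pair_sublist_append_cons_append_cons (hlt : ∀ a ∈ x ++ y ++ z, m < a)
    (hsorted : (x ++ y ++ z).Pairwise (· ≥ ·)) {a b : ℕ} (hab : a < b)
    (h : [a, b] <+ x ++ m :: (y ++ m :: z)) : a = m := by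
  by_contra ham
  have hma : m < a :=
    (le_of_mem_append_cons_append_cons hlt (h.subset mem_cons_self)).lt_of_ne (Ne.symm ham)
  have hf := h.filter (· ≠ m)
  rw [filter_ne_append_cons_append_cons hlt, filter_eq_self.mpr (by simp; omega)] at hf
  exact absurd (pairwise_iff_forall_sublist.mp hsorted hf) (by omega)

theorem avoids_123_213_231_iff (hlt : ∀ a ∈ x ++ y ++ z, m < a) :
    (Avoids (x ++ m :: (y ++ m :: z)) [1, 2, 3] ∧ Avoids (x ++ m :: (y ++ m :: z)) [2, 1, 3] ∧
      Avoids (x ++ m :: (y ++ m :: z)) [2, 3, 1]) ↔ (x ++ y ++ z).Pairwise (· ≥ ·) := by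
  simp only [Avoids, contains_123_iff, contains_213_iff, contains_231_iff]
  constructor
  · rintro ⟨h123, h213, h231⟩
    refine pairwise_iff_forall_sublist.mpr fun {a b} hab => not_lt.mp fun hab' => ?_
    have hma := hlt a (hab.subset (by simp))
    have hmb := hlt b (hab.subset (by simp))
    have hsub : x ++ y ++ z <+ x ++ m :: (y ++ m :: z) := by simp
    rcases sublist_insert_of_pair_sublist (hab.trans hsub) (by simp) hma.ne hmb.ne with h | h | h
    · exact h123 ⟨m, a, b, hma, hab', h⟩
    · exact h213 ⟨m, a, b, hma, hab', h⟩
    · exact h231 ⟨m, a, b, hma, hab', h⟩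
  · intro hsorted
    have key : ∀ a b c, a < b → b < c → a ∈ x ++ m :: (y ++ m :: z) →
        ¬ [b, c] <+ x ++ m :: (y ++ m :: z) := fun a b c hab hbc ha hbc' => by
      have := eq_of_pair_sublist_append_cons_append_cons hlt hsorted hbc hbc'
      have := le_of_mem_append_cons_append_cons hlt ha
      omega
    refine ⟨?_, ?_, ?_⟩ <;> rintro ⟨a, b, c, hab, hbc, h⟩
    · exact key a b c hab hbc (h.subset (by simp)) ((by simp : [b, c] <+ [a, b, c]).trans h)
    · exact key a b c hab hbc (h.subset (by simp)) ((by simp : [b, c] <+ [b, a, c]).trans h)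
    · exact key a b c hab hbc (h.subset (by simp)) ((by simp : [b, c] <+ [b, c, a]).trans h)

theorem avoids_1221_iff_nodup (hlt : ∀ a ∈ x ++ y ++ z, m < a)
    (hsorted : (x ++ y ++ z).Pairwise (· ≥ ·)) :
    Avoids (x ++ m :: (y ++ m :: z)) [1, 2, 2, 1] ↔ y.Nodup := by
  have hx : m ∉ x := fun h => (hlt m (by simp [h])).false
  have hz : m ∉ z := fun h => (hlt m (by simp [h])).false
  simp only [Avoids, contains_1221_iff, nodup_iff_sublist, not_exists, not_and]
  constructor
  · intro h b hb
    have hby : b ∈ y := hb.subset mem_cons_self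
    refine h m b (hlt b (by simp [hby])) ?_
    exact ((hb.append (singleton_sublist.mpr mem_cons_self)).cons_cons m).trans
      (sublist_append_right x _)
  · intro h a b hab hs
    obtain rfl := eq_of_pair_sublist_append_cons_append_cons hlt hsorted hab
      ((by simp : [a, b] <+ [a, b, b, a]).trans hs)
    exact h b (sublist_of_cons_append_singleton_sublist hx hz hs)

theorem avoids_2112_iff_disjoint (hlt : ∀ a ∈ x ++ y ++ z, m < a)
    (hsorted : (x ++ y ++ z).Pairwise (· ≥ ·)) :
    Avoids (x ++ m :: (y ++ m :: z)) [2, 1, 1, 2] ↔ x.Disjoint z := by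
  have hx : m ∉ x := fun h => (hlt m (by simp [h])).false
  have hy : m ∉ y := fun h => (hlt m (by simp [h])).false
  have hz : m ∉ z := fun h => (hlt m (by simp [h])).false
  simp only [Avoids, contains_2112_iff, not_exists, not_and]
  constructor
  · intro h b hbx hbz
    refine h m b (hlt b (by simp [hbx])) ?_
    exact (singleton_sublist.mpr hbx).append
      (((singleton_sublist.mpr hbz).cons_cons m).trans (sublist_append_right y _) |>.cons_cons m)
  · intro hd a b hab hs
    obtain rfl := eq_of_pair_sublist_append_cons_append_cons hlt hsorted hab
      ((by simp : [a, b] <+ [b, a, a, b]).trans hs)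
    refine hd (mem_of_sublist_append_cons_append_cons hab.ne' hy hz
      ((by simp : [b, a, a] <+ [b, a, a, b]).trans hs)) ?_
    have hs' : [b, a, a] <+ z.reverse ++ a :: (y.reverse ++ a :: x.reverse) := by
      simpa using reverse_sublist.mpr ((by simp : [a, a, b] <+ [b, a, a, b]).trans hs)
    simpa using mem_of_sublist_append_cons_append_cons hab.ne' (by simpa) (by simpa) hs'

end MinimalLetter

def doubledDesc : ℕ → List ℕ
  | 0 | 1 => []
  | n + 2 => (n + 2) :: (n + 2) :: doubledDesc (n + 1)

theorem length_doubledDesc (n : ℕ) : (doubledDesc n).length = 2 * n - 2 := by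
  induction n with
  | zero => rfl
  | succ n ih =>
    rcases n with _ | n
    · rfl
    · simp only [doubledDesc, length_cons, ih]; omega

theorem getElem?_doubledDesc (n i : ℕ) :
    (doubledDesc n)[i]? = if i < 2 * n - 2 then some (n - i / 2) else none := by
  induction n generalizing i with
  | zero => simp [doubledDesc]
  | succ n ih =>
    rcases n with _ | n
    · simp [doubledDesc]
    rcases i with _ | _ | i
    · simp [doubledDesc]
    · simp [doubledDesc]; omega
    · simp only [doubledDesc, getElem?_cons_succ, ih]
      split_ifs <;> grind

theorem count_doubledDesc (n a : ℕ) :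
    (doubledDesc n).count a = if 2 ≤ a ∧ a ≤ n then 2 else 0 := by
  induction n with
  | zero => simp [doubledDesc]; omega
  | succ n ih =>
    rcases n with _ | n
    · simp [doubledDesc]; omega
    simp only [doubledDesc, count_cons, ih, beq_iff_eq]
    split_ifs <;> omega

theorem mem_doubledDesc {n a : ℕ} : a ∈ doubledDesc n ↔ 2 ≤ a ∧ a ≤ n := by
  rw [← count_pos_iff, count_doubledDesc]
  split_ifs <;> simp_all

theorem pairwise_doubledDesc (n : ℕ) : (doubledDesc n).Pairwise (· ≥ ·) := by
  refine pairwise_iff_getElem.mpr fun i j hi hj hij => ?_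
  have hi' := getElem?_doubledDesc n i
  have hj' := getElem?_doubledDesc n j
  simp [getElem?_eq_getElem hi, getElem?_eq_getElem hj] at hi' hj'
  omega

theorem eq_iff_even_of_doubledDesc_eq {n a b : ℕ} {u v : List ℕ}
    (h : doubledDesc n = u ++ a :: b :: v) : a = b ↔ Even u.length := by
  have ha := getElem?_doubledDesc n u.length
  have hb := getElem?_doubledDesc n (u.length + 1)
  simp [h] at ha hb
  rw [Nat.even_iff]
  omega

theorem eq_nil_and_even_of_doubledDesc_eq {n a : ℕ} {u v t : List ℕ}
    (h : doubledDesc n = u ++ a :: v ++ a :: t) : v = [] ∧ Even u.length := by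
  have ha : (doubledDesc n)[u.length]? = some a := by simp [h]
  have ha' : (doubledDesc n)[(u ++ a :: v).length]? = some a := by
    rw [h, getElem?_append_right le_rfl]; simp
  simp [getElem?_doubledDesc] at ha ha'
  rw [← length_eq_zero_iff, Nat.even_iff]
  omega

/-- The shape of `x 1 y 1 z` with `p = |x|` letters before the first `1` and `k = |y|` between
the two. -/
def IsAdmissibleSplit (p k : ℕ) : Prop :=
  k = 0 ∧ Even p ∨ k = 1 ∨ k = 2 ∧ Odd p

section DoubledDesc

variable {n : ℕ} {x y z : List ℕ}

theorem nodup_iff_of_append_append_eq_doubledDesc (h : x ++ y ++ z = doubledDesc n) :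
    y.Nodup ↔ y.length ≤ 1 ∨ y.length = 2 ∧ Odd x.length := by
  rcases y with _ | ⟨a, _ | ⟨b, _ | ⟨c, y⟩⟩⟩
  · simp
  · simp
  · have hab := eq_iff_even_of_doubledDesc_eq
      (h.symm.trans (by simp) : doubledDesc n = x ++ a :: b :: z)
    simp [← Nat.not_even_iff_odd, hab]
  · have hab := eq_iff_even_of_doubledDesc_eq
      (h.symm.trans (by simp) : doubledDesc n = x ++ a :: b :: c :: (y ++ z))
    have hbc := eq_iff_even_of_doubledDesc_eq
      (h.symm.trans (by simp) : doubledDesc n = (x ++ [a]) ++ b :: c :: (y ++ z))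
    simp only [length_append, length_singleton, Nat.even_add_one] at hbc
    simp only [length_cons, nodup_cons, mem_cons]
    by_cases he : Even x.length <;> simp_all

theorem disjoint_iff_of_append_append_eq_doubledDesc (h : x ++ y ++ z = doubledDesc n) :
    x.Disjoint z ↔ y ≠ [] ∨ Even x.length := by
  rw [← not_iff_not, not_or, not_not, Nat.not_even_iff_odd]
  constructor
  · intro hxz
    obtain ⟨b, hbx, hbz⟩ : ∃ b ∈ x, b ∈ z := by simpa [List.Disjoint] using hxz
    obtain ⟨x₁, x₂, rfl⟩ := append_of_mem hbx
    obtain ⟨z₁, z₂, rfl⟩ := append_of_mem hbz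
    obtain ⟨hnil, heven⟩ := eq_nil_and_even_of_doubledDesc_eq (u := x₁) (a := b)
      (v := x₂ ++ y ++ z₁) (t := z₂) (h.symm.trans (by simp))
    simp only [append_eq_nil_iff] at hnil
    obtain ⟨⟨rfl, rfl⟩, rfl⟩ := hnil
    simpa using heven.add_one
  · rintro ⟨rfl, hodd⟩ hxz
    have hlen := congrArg length h
    simp only [append_nil, length_append, length_doubledDesc] at hlen
    obtain ⟨x, c, rfl⟩ : ∃ x' c, x = x' ++ [c] := by
      rcases eq_nil_or_concat x with rfl | hx
      · simp at hodd
      · simpa using hx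
    obtain ⟨e, z, rfl⟩ : ∃ e z', z = e :: z' := by
      rcases z with _ | ⟨e, z⟩
      · simp [Nat.odd_iff] at hodd hlen; omega
      · exact ⟨e, z, rfl⟩
    have hce := eq_iff_even_of_doubledDesc_eq
      (h.symm.trans (by simp) : doubledDesc n = x ++ c :: e :: z)
    simp only [length_append, length_singleton, Nat.odd_add_one, Nat.not_odd_iff_even] at hodd
    exact hxz (mem_append_right x mem_cons_self) (hce.mpr hodd ▸ mem_cons_self)

theorem nodup_and_disjoint_iff_of_append_append_eq_doubledDesc
    (h : x ++ y ++ z = doubledDesc n) :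
    y.Nodup ∧ x.Disjoint z ↔ IsAdmissibleSplit x.length y.length := by
  rw [nodup_iff_of_append_append_eq_doubledDesc h, disjoint_iff_of_append_append_eq_doubledDesc h,
    IsAdmissibleSplit, ne_eq, ← length_eq_zero_iff, ← Nat.not_even_iff_odd]
  by_cases he : Even x.length <;> simp [he, -length_eq_zero_iff] <;> omega

end DoubledDesc

theorem isMultisetPerm_append_cons_append_cons_iff {n : ℕ} {x y z : List ℕ} (hn : 1 ≤ n)
    (hlt : ∀ a ∈ x ++ y ++ z, 1 < a) :
    IsMultisetPerm n (x ++ 1 :: (y ++ 1 :: z)) ↔ (x ++ y ++ z).Perm (doubledDesc n) := by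
  rw [IsMultisetPerm, perm_iff_count]
  refine forall_congr' fun a => ?_
  have h1 : 1 ∉ x ++ y ++ z := fun h => (hlt 1 h).false
  simp only [mem_append, not_or] at h1
  rw [count_doubledDesc]
  rcases eq_or_ne a 1 with rfl | ha
  · simp [count_append, count_eq_zero.mpr h1.1.1, count_eq_zero.mpr h1.1.2,
      count_eq_zero.mpr h1.2, hn]
  · simp [count_append, ha.symm]
    split_ifs <;> omega

section InsertTwice

variable {α : Type*}

def insertTwice (m : α) (l : List α) (pk : ℕ × ℕ) : List α :=
  l.take pk.1 ++ m :: ((l.drop pk.1).take pk.2 ++ m :: l.drop (pk.1 + pk.2))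

theorem insertTwice_length_length {m : α} {l x y z : List α} (h : x ++ y ++ z = l) :
    insertTwice m l (x.length, y.length) = x ++ m :: (y ++ m :: z) := by
  subst h
  simp [insertTwice]

theorem insertTwice_injOn {m : α} {l : List α} (hm : m ∉ l) :
    Set.InjOn (insertTwice m l) {pk | pk.1 + pk.2 ≤ l.length} := by
  classical
  have idxOf_eq : ∀ {u r : List α}, u <+ l → (u ++ m :: r).idxOf m = u.length := fun hu => by
    simp [idxOf_append_of_notMem fun h => hm (hu.subset h)]
  rintro ⟨p, k⟩ hpk ⟨p', k'⟩ hpk' h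
  simp only [Set.mem_ofPred_eq] at hpk hpk'
  have hp : p = p' := by
    have := congrArg (idxOf m) h
    simp only [insertTwice] at this
    rw [idxOf_eq (take_sublist _ _), idxOf_eq (take_sublist _ _)] at this
    simp at this
    omega
  subst hp
  simp only [insertTwice, append_cancel_left_eq, cons.injEq, true_and] at h
  have := congrArg (idxOf m) h
  rw [idxOf_eq ((take_sublist _ _).trans (drop_sublist _ _)),
    idxOf_eq ((take_sublist _ _).trans (drop_sublist _ _))] at this
  simp at this
  simp only [Prod.mk.injEq, true_and]
  omega

end InsertTwice

def admissibleSplits (n : ℕ) : Finset (ℕ × ℕ) :=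
  (Finset.range n).image (fun i => (2 * i, 0)) ∪
    (Finset.range (2 * n - 2)).image (fun p => (p, 1)) ∪
    (Finset.range (n - 2)).image (fun i => (2 * i + 1, 2))

theorem mem_admissibleSplits {n : ℕ} (hn : 1 ≤ n) {pk : ℕ × ℕ} :
    pk ∈ admissibleSplits n ↔
    pk.1 + pk.2 ≤ 2 * n - 2 ∧ IsAdmissibleSplit pk.1 pk.2 := by
  obtain ⟨p, k⟩ := pk
  simp only [admissibleSplits, IsAdmissibleSplit, Finset.mem_union, Finset.mem_image,
    Finset.mem_range, Prod.mk.injEq, Nat.even_iff, Nat.odd_iff]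
  constructor
  · rintro ((⟨i, hi, rfl, rfl⟩ | ⟨i, hi, rfl, rfl⟩) | ⟨i, hi, rfl, rfl⟩) <;> omega
  · rintro ⟨hle, ⟨rfl, hp⟩ | rfl | ⟨rfl, hp⟩⟩
    · refine .inl (.inl ⟨p / 2, ?_, ?_, rfl⟩) <;> omega
    · exact .inl (.inr ⟨p, by omega, rfl, rfl⟩)
    · refine .inr ⟨p / 2, ?_, ?_, rfl⟩ <;> omega

theorem card_admissibleSplits {n : ℕ} (hn : 2 ≤ n) :
    (admissibleSplits n).card = 4 * (n - 1) := by
  rw [admissibleSplits, Finset.card_union_of_disjoint, Finset.card_union_of_disjoint,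
    Finset.card_image_of_injective _ (fun i j h => by simpa using h),
    Finset.card_image_of_injective _ (fun i j h => by simpa using h),
    Finset.card_image_of_injective _ (fun i j h => by simp at h; omega)]
  · simp only [Finset.card_range]
    omega
  all_goals
    simp only [Finset.disjoint_left, Finset.mem_union, Finset.mem_image, Finset.mem_range]
    grind

theorem isNonnesting_and_avoids_iff {n : ℕ} (hn : 1 ≤ n) {w : List ℕ} :
    (IsNonnesting n w ∧ Avoids w [1, 2, 3] ∧ Avoids w [2, 1, 3] ∧ Avoids w [2, 3, 1]) ↔
      ∃ x y z, w = x ++ 1 :: (y ++ 1 :: z) ∧ x ++ y ++ z = doubledDesc n ∧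
        IsAdmissibleSplit x.length y.length := by
  constructor
  · rintro ⟨⟨hperm, h1221, h2112⟩, h123, h213, h231⟩
    obtain ⟨x, y, z, rfl, hx, hy, hz⟩ :=
      eq_append_cons_append_cons_of_count_eq_two (by simp [hperm 1, hn] : w.count 1 = 2)
    have hlt : ∀ a ∈ x ++ y ++ z, 1 < a := by
      intro a ha
      have hpos : 0 < count a (x ++ 1 :: (y ++ 1 :: z)) :=
        count_pos_iff.mpr (by simp at ha ⊢; tauto)
      have ha1 : a ≠ 1 := by rintro rfl; simp_all
      rw [hperm a] at hpos
      split_ifs at hpos <;> omega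
    have hsorted := (avoids_123_213_231_iff hlt).mp ⟨h123, h213, h231⟩
    have hD := ((isMultisetPerm_append_cons_append_cons_iff hn hlt).mp hperm).eq_of_pairwise'
      hsorted (pairwise_doubledDesc n)
    refine ⟨x, y, z, rfl, hD, (nodup_and_disjoint_iff_of_append_append_eq_doubledDesc hD).mp ?_⟩
    exact ⟨(avoids_1221_iff_nodup hlt hsorted).mp h1221,
      (avoids_2112_iff_disjoint hlt hsorted).mp h2112⟩
  · rintro ⟨x, y, z, rfl, hD, hgap⟩
    have hlt : ∀ a ∈ x ++ y ++ z, 1 < a := fun a ha => (mem_doubledDesc.mp (hD ▸ ha)).1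
    have hsorted : (x ++ y ++ z).Pairwise (· ≥ ·) := hD ▸ pairwise_doubledDesc n
    obtain ⟨hnodup, hdisj⟩ :=
      (nodup_and_disjoint_iff_of_append_append_eq_doubledDesc hD).mpr hgap
    exact ⟨⟨(isMultisetPerm_append_cons_append_cons_iff hn hlt).mpr (hD ▸ Perm.refl _),
      (avoids_1221_iff_nodup hlt hsorted).mpr hnodup,
      (avoids_2112_iff_disjoint hlt hsorted).mpr hdisj⟩,
      (avoids_123_213_231_iff hlt).mpr hsorted⟩

theorem setOf_isNonnesting_and_avoids_eq_image {n : ℕ} (hn : 1 ≤ n) :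
    {w : List ℕ | IsNonnesting n w ∧ Avoids w [1, 2, 3] ∧ Avoids w [2, 1, 3] ∧
      Avoids w [2, 3, 1]} = insertTwice 1 (doubledDesc n) '' admissibleSplits n := by
  ext w
  simp only [Set.mem_ofPred_eq, isNonnesting_and_avoids_iff hn, Set.mem_image, Finset.mem_coe,
    mem_admissibleSplits hn]
  constructor
  · rintro ⟨x, y, z, rfl, hD, hgap⟩
    have hlen := congrArg length hD
    simp only [length_append, length_doubledDesc] at hlen
    exact ⟨(x.length, y.length), ⟨by simp; omega, hgap⟩, insertTwice_length_length hD⟩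
  · rintro ⟨⟨p, k⟩, ⟨hle, hgap⟩, rfl⟩
    have hlen := length_doubledDesc n
    refine ⟨_, _, _, rfl, ?_, ?_⟩
    · simp [← drop_drop]
    · simpa [hlen, show p ≤ 2 * n - 2 by omega, show k ≤ 2 * n - 2 - p by omega] using hgap

theorem nonnesting_avoid_123_213_231 (n : ℕ) (hn : 2 ≤ n) :
    {w : List ℕ | IsNonnesting n w ∧
      Avoids w [1,2,3] ∧ Avoids w [2,1,3] ∧ Avoids w [2,3,1]}.ncard =
      4 * (n - 1) := by
  have hinj : Set.InjOn (insertTwice 1 (doubledDesc n)) (admissibleSplits n) :=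
    (insertTwice_injOn fun h => by simpa using mem_doubledDesc.mp h).mono fun pk hpk => by
      simpa [length_doubledDesc] using ((mem_admissibleSplits (by omega)).mp hpk).1
  rw [setOf_isNonnesting_and_avoids_eq_image (by omega), hinj.ncard_image, Set.ncard_coe_finset,
    card_admissibleSplits hn]
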